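/- Let h(x) = x log x − x + 1. Suppose 0 < a₁ < r₁ < b₁ ≤ 1 satisfy a₁³/4 + 3a₁b₁²/4 = r₁³ and h(a₁)/2 + h(b₁)/2 = h(r₁). Then for every s ∈ (0,1), setting a = s a₁, b = s b₁, r = s r₁, one has a³/4 + 3ab²/4 = r³ and h(a)/2 + h(b)/2 < h(r). -/
import Mathlib


open Real

noncomputable section

/-- The function `h(x) = x log x - x + 1` (with `h(0) = 1` since `Real.log 0 = 0`). -/
def hfun (x : ℝ) : ℝ := x * Real.log x - x + 1

lemma hfun_scale (s x : ℝ) (hs : 0 < s) (hx : 0 < x) :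
    hfun (s * x) = s * hfun x + s * Real.log s * x - s + 1 := by
  unfold hfun
  rw [Real.log_mul hs.ne' hx.ne']
  ring

theorem stmt_13 (a₁ r₁ b₁ : ℝ) (ha₁ : 0 < a₁) (har : a₁ < r₁) (hrb : r₁ < b₁) (hb₁ : b₁ ≤ 1)
    (hconstr : a₁ ^ 3 / 4 + 3 * a₁ * b₁ ^ 2 / 4 = r₁ ^ 3)
    (hent : hfun a₁ / 2 + hfun b₁ / 2 = hfun r₁)
    (s : ℝ) (hs0 : 0 < s) (hs1 : s < 1) :
    (s * a₁) ^ 3 / 4 + 3 * (s * a₁) * (s * b₁) ^ 2 / 4 = (s * r₁) ^ 3 ∧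
      hfun (s * a₁) / 2 + hfun (s * b₁) / 2 < hfun (s * r₁) := by
  have hr₁ : 0 < r₁ := ha₁.trans har
  have hb₁' : 0 < b₁ := hr₁.trans hrb
  have hmid : r₁ < (a₁ + b₁) / 2 := by
    have hcube : r₁ ^ 3 < ((a₁ + b₁) / 2) ^ 3 := by
      have h3 : 0 < (b₁ - a₁) ^ 3 := pow_pos (by linarith) 3
      nlinarith [h3]
    nlinarith [pow_pos hr₁ 3, sq_nonneg (r₁ + (a₁ + b₁) / 2), sq_nonneg (r₁ - (a₁ + b₁) / 2),
      mul_pos hr₁ (by linarith : (0:ℝ) < (a₁ + b₁) / 2)]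
  have hlog : Real.log s < 0 := Real.log_neg hs0 hs1
  constructor
  · linear_combination s ^ 3 * hconstr
  · rw [hfun_scale s a₁ hs0 ha₁, hfun_scale s b₁ hs0 hb₁',
      hfun_scale s r₁ hs0 hr₁]
    have key : s * Real.log s * ((a₁ + b₁) / 2) < s * Real.log s * r₁ := by
      have : s * Real.log s < 0 := mul_neg_of_pos_of_neg hs0 hlog
      exact (mul_lt_mul_left_of_neg this).mpr hmid
    nlinarith [hent]
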